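/- arXiv:2402.18265 — 2 statements merged into one kernel-verified Lean document; each statement's English description precedes it below -/
import Mathlib

section
/- Let G be a finite simple graph, a a vertex of G, and G' = G \ {a}. If K is a potential maximal clique of G', then at least one of K and K ∪ {a} is a potential maximal clique of G. -/
open SimpleGraph

variable {V : Type*}

/-- `C` is a connected component of `G \ K`:
nonempty, disjoint from `K`, connected, and maximal such. -/
def IsCompOf (G : SimpleGraph V) (K C : Set V) : Prop :=
  C.Nonempty ∧ Disjoint C K ∧ (G.induce C).Connected ∧
    ∀ D : Set V, C ⊆ D → Disjoint D K → (G.induce D).Connected → D = C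

/-- The neighborhood of a set `C`: vertices outside `C` with a neighbor in `C`. -/
def nbhd (G : SimpleGraph V) (C : Set V) : Set V :=
  {v | v ∉ C ∧ ∃ u ∈ C, G.Adj u v}

/-- `C` is a full component for `K` in `G`. -/
def IsFullComp (G : SimpleGraph V) (K C : Set V) : Prop :=
  IsCompOf G K C ∧ ∀ v ∈ K, ∃ u ∈ C, G.Adj u v

/-- Bouchitté–Todinca characterization of potential maximal cliques:
(a) no full component, (b) non-adjacent pairs of `K` covered by a common component. -/
def IsPMC (G : SimpleGraph V) (K : Set V) : Prop :=
  (∀ C : Set V, IsCompOf G K C → ¬ ∀ v ∈ K, ∃ u ∈ C, G.Adj u v) ∧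
  (∀ x ∈ K, ∀ y ∈ K, x ≠ y → ¬ G.Adj x y →
    ∃ C : Set V, IsCompOf G K C ∧ (∃ u ∈ C, G.Adj u x) ∧ (∃ u ∈ C, G.Adj u y))

/-!
Let `Ca` be the component of `G \ K` containing `a`; the components of `G \ K` avoiding `a` are
exactly the components of `G' \ K`. If `Ca` is not full, `K` is a PMC of `G`: no component is
full, and the component of `G' \ K` covering a non-adjacent pair of `K` grows into one of `G \ K`.
If `Ca` is full, `K ∪ {a}` is a PMC: the components of `G \ (K ∪ {a})` are those of `G' \ K`,
and for `x ∈ K` not adjacent to `a`, the component of `G \ (K ∪ {a})` through a neighbour of `x`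
in `Ca` lies in `Ca`, so by connectivity of `Ca` it also contains a neighbour of `a`.
-/

namespace SimpleGraph

variable {G : SimpleGraph V}

lemma induce_singleton_connected (v : V) : (G.induce {v}).Connected := by
  rw [induce_singleton_eq_top]
  exact connected_top

lemma exists_adj_of_induce_connected {T C : Set V} (hT : (G.induce T).Connected)
    {c b : V} (hcT : c ∈ T) (hcC : c ∈ C) (hbT : b ∈ T) (hbC : b ∉ C) :
    ∃ u ∈ C, ∃ w ∈ T \ C, G.Adj u w := by
  obtain ⟨p⟩ := hT.preconnected ⟨c, hcT⟩ ⟨b, hbT⟩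
  obtain ⟨d, -, hd₁, hd₂⟩ := p.exists_boundary_dart (Subtype.val ⁻¹' C) hcC hbC
  exact ⟨d.fst, hd₁, d.snd, ⟨d.snd.2, hd₂⟩, d.adj⟩

noncomputable def induceInduceIsoImage (G : SimpleGraph V) (S : Set V) (C : Set S) :
    (G.induce S).induce C ≃g G.induce (Subtype.val '' C) where
  toEquiv := Equiv.Set.image Subtype.val C Subtype.val_injective
  map_rel_iff' := by simp [Equiv.Set.image, Equiv.Set.imageOfInjOn]

end SimpleGraph

namespace IsCompOf

variable {G : SimpleGraph V} {K C : Set V}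

lemma subset_of_connected (hC : IsCompOf G K C) {T : Set V} (hT : (G.induce T).Connected)
    (hTK : Disjoint T K) (hCT : (C ∩ T).Nonempty) : T ⊆ C := by
  have hU : (G.induce (C ∪ T)).Connected :=
    induce_union_connected hC.2.2.1.preconnected hT.preconnected hCT
  rw [← hC.2.2.2 _ Set.subset_union_left (hC.2.1.union_left hTK) hU]
  exact Set.subset_union_right

lemma eq_of_mem (hC : IsCompOf G K C) {D : Set V} (hD : IsCompOf G K D) {v : V}
    (hvC : v ∈ C) (hvD : v ∈ D) : C = D :=
  (hD.subset_of_connected hC.2.2.1 hC.2.1 ⟨v, hvD, hvC⟩).antisymm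
    (hC.subset_of_connected hD.2.2.1 hD.2.1 ⟨v, hvC, hvD⟩)

lemma mem_of_adj (hC : IsCompOf G K C) {u v : V} (hu : u ∈ C) (huv : G.Adj u v) (hv : v ∉ K) :
    v ∈ C := by
  have huK : u ∉ K := Set.disjoint_left.mp hC.2.1 hu
  refine hC.subset_of_connected (induce_pair_connected_of_adj huv) ?_ ⟨u, hu, by simp⟩ (by simp)
  simp [Set.disjoint_insert_left, huK, hv]

lemma mono (hC : IsCompOf G K C) {K' : Set V} (hKK' : K ⊆ K') (hCK' : Disjoint C K') :
    IsCompOf G K' C :=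
  ⟨hC.1, hCK', hC.2.2.1, fun D hCD hDK' hD => hC.2.2.2 D hCD (hDK'.mono_right hKK') hD⟩

lemma exists_adj_of_isCompOf_union_singleton (hC : IsCompOf G K C) {a : V} (haC : a ∈ C)
    {D : Set V} (hD : IsCompOf G (K ∪ {a}) D) {u : V} (huD : u ∈ D) (huC : u ∈ C) :
    ∃ w ∈ D, G.Adj w a := by
  have hDK : Disjoint D K := hD.2.1.mono_right Set.subset_union_left
  have haD : a ∉ D := Set.disjoint_right.mp hD.2.1 (Or.inr rfl)
  have hDC : D ⊆ C := hC.subset_of_connected hD.2.2.1 hDK ⟨u, huC, huD⟩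
  obtain ⟨w, hwD, t, ⟨htC, htD⟩, hwt⟩ :=
    exists_adj_of_induce_connected hC.2.2.1 (hDC huD) huD haC haD
  have hta : t = a := by
    by_contra hta
    have htK : t ∉ K := Set.disjoint_left.mp hC.2.1 htC
    exact htD (hD.mem_of_adj hwD hwt (by simp [htK, hta]))
  exact ⟨w, hwD, hta ▸ hwt⟩

end IsCompOf

section Finite

variable [Finite V] {G : SimpleGraph V} {K : Set V}

lemma exists_isCompOf_superset {T : Set V} (hT : T.Nonempty) (hTK : Disjoint T K)
    (hTconn : (G.induce T).Connected) : ∃ C, IsCompOf G K C ∧ T ⊆ C := by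
  obtain ⟨C, ⟨hTC, hCK, hC⟩, hmax⟩ := Set.Finite.exists_maximalFor id
    {D : Set V | T ⊆ D ∧ Disjoint D K ∧ (G.induce D).Connected} (Set.toFinite _)
    ⟨T, subset_rfl, hTK, hTconn⟩
  exact ⟨C, ⟨hT.mono hTC, hCK, hC, fun D hCD hDK hD =>
    (hmax ⟨hTC.trans hCD, hDK, hD⟩ hCD).antisymm hCD⟩, hTC⟩

lemma exists_isCompOf_mem {v : V} (hv : v ∉ K) : ∃ C, IsCompOf G K C ∧ v ∈ C := by
  obtain ⟨C, hC, hvC⟩ := exists_isCompOf_superset (Set.singleton_nonempty v)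
    (Set.disjoint_singleton_left.mpr hv) (induce_singleton_connected (G := G) v)
  exact ⟨C, hC, hvC rfl⟩

end Finite

section Induce

variable {G : SimpleGraph V} {S : Set V}

lemma connected_induce_image_iff {C : Set S} :
    (G.induce (Subtype.val '' C)).Connected ↔ ((G.induce S).induce C).Connected :=
  (induceInduceIsoImage G S C).connected_iff.symm

lemma isCompOf_induce_iff {K C : Set S} :
    IsCompOf (G.induce S) K C ↔ IsCompOf G (Subtype.val '' K ∪ Sᶜ) (Subtype.val '' C) := by
  have hdisj (D : Set S) :
      Disjoint (Subtype.val '' D) (Subtype.val '' K ∪ Sᶜ) ↔ Disjoint D K := by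
    rw [Set.disjoint_union_right, Set.disjoint_image_iff Subtype.val_injective,
      Set.disjoint_compl_right_iff_subset]
    simp
  simp only [IsCompOf, Set.image_nonempty, hdisj, connected_induce_image_iff]
  refine and_congr_right fun _ => and_congr_right fun _ => and_congr_right fun _ =>
    ⟨fun hmax D hCD hDK hD => ?_, fun hmax D hCD hDK hD => ?_⟩
  · have hDS : D ⊆ S :=
      Set.disjoint_compl_right_iff_subset.mp (hDK.mono_right Set.subset_union_right)
    obtain ⟨D, rfl⟩ : ∃ D' : Set S, Subtype.val '' D' = D :=
      ⟨_, by rw [Subtype.image_preimage_coe, Set.inter_eq_right.mpr hDS]⟩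
    rw [Set.image_subset_image_iff Subtype.val_injective] at hCD
    rw [hdisj] at hDK
    rw [connected_induce_image_iff] at hD
    rw [hmax D hCD hDK hD]
  · exact Set.image_injective.mpr Subtype.val_injective
      (hmax _ (Set.image_mono hCD) ((hdisj D).mpr hDK) (connected_induce_image_iff.mpr hD))

lemma IsCompOf.exists_eq_image {K : Set S} {C : Set V}
    (hC : IsCompOf G (Subtype.val '' K ∪ Sᶜ) C) :
    ∃ C' : Set S, IsCompOf (G.induce S) K C' ∧ Subtype.val '' C' = C := by
  have hCS : C ⊆ S :=
    Set.disjoint_compl_right_iff_subset.mp (hC.2.1.mono_right Set.subset_union_right)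
  have hC' : Subtype.val '' (Subtype.val ⁻¹' C : Set S) = C := by
    rw [Subtype.image_preimage_coe, Set.inter_eq_right.mpr hCS]
  refine ⟨_, isCompOf_induce_iff.mpr ?_, hC'⟩
  rwa [hC']

variable {K : Set S}

lemma IsPMC.not_full_of_isCompOf (hK : IsPMC (G.induce S) K) {C : Set V}
    (hC : IsCompOf G (Subtype.val '' K ∪ Sᶜ) C) :
    ¬ ∀ v ∈ Subtype.val '' K, ∃ u ∈ C, G.Adj u v := by
  obtain ⟨C', hC', rfl⟩ := hC.exists_eq_image
  simpa using hK.1 C' hC'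

lemma IsPMC.exists_isCompOf_adj_adj (hK : IsPMC (G.induce S) K) {x y : V}
    (hx : x ∈ Subtype.val '' K) (hy : y ∈ Subtype.val '' K) (hxy : x ≠ y) (hnadj : ¬ G.Adj x y) :
    ∃ C, IsCompOf G (Subtype.val '' K ∪ Sᶜ) C ∧ (∃ u ∈ C, G.Adj u x) ∧ (∃ u ∈ C, G.Adj u y) := by
  obtain ⟨x, hx, rfl⟩ := hx
  obtain ⟨y, hy, rfl⟩ := hy
  obtain ⟨C, hC, hCx, hCy⟩ := hK.2 x hx y hy (ne_of_apply_ne _ hxy) hnadj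
  exact ⟨_, isCompOf_induce_iff.mp hC, by simpa using hCx, by simpa using hCy⟩

end Induce

section DeleteVertex

variable [Finite V] {G : SimpleGraph V} {a : V} {K : Set {v : V | v ≠ a}} {Ca : Set V}

lemma isPMC_union_singleton_of_full (hK : IsPMC (G.induce {v | v ≠ a}) K)
    (hCa : IsCompOf G (Subtype.val '' K) Ca) (haCa : a ∈ Ca)
    (hfull : ∀ v ∈ Subtype.val '' K, ∃ u ∈ Ca, G.Adj u v) :
    IsPMC G (Subtype.val '' K ∪ {a}) := by
  have joined_to_a : ∀ x ∈ Subtype.val '' K, ¬ G.Adj x a →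
      ∃ C, IsCompOf G (Subtype.val '' K ∪ {a}) C ∧ (∃ u ∈ C, G.Adj u x) ∧ ∃ u ∈ C, G.Adj u a := by
    intro x hx hxa
    obtain ⟨u, huCa, hux⟩ := hfull x hx
    have hua : u ≠ a := by
      rintro rfl
      exact hxa hux.symm
    have huK : u ∉ Subtype.val '' K := Set.disjoint_left.mp hCa.2.1 huCa
    obtain ⟨D, hD, huD⟩ := exists_isCompOf_mem (G := G) (K := Subtype.val '' K ∪ {a})
      fun hu => hu.elim huK hua
    exact ⟨D, hD, ⟨u, huD, hux⟩, hCa.exists_adj_of_isCompOf_union_singleton haCa hD huD huCa⟩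
  refine ⟨fun C hC hCfull => ?_, ?_⟩
  · rw [← Set.compl_ne_eq_singleton] at hC
    exact hK.not_full_of_isCompOf hC fun v hv => hCfull v (.inl hv)
  rintro x (hx | rfl) y (hy | rfl) hxy hnadj
  · simpa only [Set.compl_ne_eq_singleton] using hK.exists_isCompOf_adj_adj hx hy hxy hnadj
  · exact joined_to_a x hx hnadj
  · obtain ⟨C, hC, hCy, hCx⟩ := joined_to_a y hy (hnadj ∘ G.adj_symm)
    exact ⟨C, hC, hCx, hCy⟩
  · exact absurd rfl hxy

lemma isPMC_of_not_full (hK : IsPMC (G.induce {v | v ≠ a}) K)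
    (hCa : IsCompOf G (Subtype.val '' K) Ca) (haCa : a ∈ Ca)
    (hnfull : ¬ ∀ v ∈ Subtype.val '' K, ∃ u ∈ Ca, G.Adj u v) :
    IsPMC G (Subtype.val '' K) := by
  refine ⟨fun C hC hCfull => ?_, fun x hx y hy hxy hnadj => ?_⟩
  · by_cases haC : a ∈ C
    · exact hnfull (hCa.eq_of_mem hC haCa haC ▸ hCfull)
    · have hC' : IsCompOf G (Subtype.val '' K ∪ {v | v ≠ a}ᶜ) C := by
        rw [Set.compl_ne_eq_singleton]
        exact hC.mono Set.subset_union_left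
          (hC.2.1.union_right (Set.disjoint_singleton_right.mpr haC))
      exact hK.not_full_of_isCompOf hC' hCfull
  · obtain ⟨C, hC, hCx, hCy⟩ := hK.exists_isCompOf_adj_adj hx hy hxy hnadj
    obtain ⟨D, hD, hCD⟩ :=
      exists_isCompOf_superset hC.1 (hC.2.1.mono_right Set.subset_union_left) hC.2.2.1
    exact ⟨D, hD, hCx.imp fun u hu => ⟨hCD hu.1, hu.2⟩, hCy.imp fun u hu => ⟨hCD hu.1, hu.2⟩⟩

end DeleteVertex

theorem stmt3 [Fintype V] (G : SimpleGraph V) (a : V)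
    (K : Set {v : V // v ∈ ({v : V | v ≠ a} : Set V)})
    (hK : IsPMC (G.induce {v : V | v ≠ a}) K) :
    IsPMC G (Subtype.val '' K) ∨ IsPMC G (Subtype.val '' K ∪ {a}) := by
  have haK : a ∉ Subtype.val '' K := fun ⟨k, _, hka⟩ => k.2 hka
  obtain ⟨Ca, hCa, haCa⟩ := exists_isCompOf_mem (G := G) haK
  by_cases hfull : ∀ v ∈ Subtype.val '' K, ∃ u ∈ Ca, G.Adj u v
  · exact .inr (isPMC_union_singleton_of_full hK hCa haCa hfull)
  · exact .inl (isPMC_of_not_full hK hCa haCa hfull)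
end

section
/- Let G be a graph, a a vertex, G' = G \ {a}, and K a potential maximal clique of G'. Then for every pair of non-adjacent vertices x, y ∈ K (in G), there exists a connected component C of G \ K such that both x and y have a neighbor in C. (That is, condition (b) of the PMC characterization is preserved when adding a vertex to the graph.) -/
open SimpleGraph

variable {V : Type*}

/-!
Lift the component of `G' \ K` witnessing condition (b) in `G'` to `G`: as a subset of `V` it is
still nonempty, connected and disjoint from `K`, so it lies inside a component of `G \ K` (a
maximal such superset, which exists as `V` is finite), and that component contains the
neighbours of `x` and `y`.
-/

lemma SimpleGraph.Connected.induce_image_val {G : SimpleGraph V} {s : Set V} {t : Set s}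
    (h : ((G.induce s).induce t).Connected) : (G.induce (Subtype.val '' t)).Connected :=
  (Iso.connected_iff ⟨Equiv.Set.image Subtype.val t Subtype.val_injective, by
    simp [Equiv.Set.image, Equiv.Set.imageOfInjOn]⟩).mp h

lemma exists_isCompOf_superset_s9 [Finite V] {G : SimpleGraph V} {K X : Set V}
    (hne : X.Nonempty) (hdisj : Disjoint X K) (hconn : (G.induce X).Connected) :
    ∃ C, IsCompOf G K C ∧ X ⊆ C := by
  let S : Set (Set V) := {D | X ⊆ D ∧ Disjoint D K ∧ (G.induce D).Connected}
  obtain ⟨C, ⟨hXC, hCK, hC⟩, hmax⟩ :=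
    S.toFinite.exists_maximalFor id S ⟨X, subset_rfl, hdisj, hconn⟩
  refine ⟨C, ⟨hne.mono hXC, hCK, hC, fun D hCD hDK hD ↦ ?_⟩, hXC⟩
  exact (hCD.antisymm (hmax ⟨hXC.trans hCD, hDK, hD⟩ hCD)).symm

lemma IsCompOf.exists_isCompOf_image_val_superset [Finite V] {G : SimpleGraph V} {s : Set V}
    {K C' : Set s} (hC' : IsCompOf (G.induce s) K C') :
    ∃ C, IsCompOf G (Subtype.val '' K) C ∧ Subtype.val '' C' ⊆ C :=
  exists_isCompOf_superset_s9 (hC'.1.image _)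
    ((Set.disjoint_image_iff Subtype.val_injective).mpr hC'.2.1) hC'.2.2.1.induce_image_val

theorem stmt9 [Fintype V] (G : SimpleGraph V) (a : V)
    (K : Set {v : V // v ∈ ({v : V | v ≠ a} : Set V)})
    (hK : IsPMC (G.induce {v : V | v ≠ a}) K) :
    ∀ x ∈ Subtype.val '' K, ∀ y ∈ Subtype.val '' K, x ≠ y → ¬ G.Adj x y →
      ∃ C : Set V, IsCompOf G (Subtype.val '' K) C ∧
        (∃ u ∈ C, G.Adj u x) ∧ (∃ u ∈ C, G.Adj u y) := by
  rintro _ ⟨x, hxK, rfl⟩ _ ⟨y, hyK, rfl⟩ hxy hnadj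
  obtain ⟨C', hC', ⟨u, huC', hux⟩, ⟨w, hwC', hwy⟩⟩ :=
    hK.2 x hxK y hyK (ne_of_apply_ne _ hxy) hnadj
  obtain ⟨C, hC, hC'C⟩ := hC'.exists_isCompOf_image_val_superset
  exact ⟨C, hC, ⟨u, hC'C ⟨u, huC', rfl⟩, hux⟩, ⟨w, hC'C ⟨w, hwC', rfl⟩, hwy⟩⟩
end
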